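/- Let $N \ge 2$ and $M \ge N + 2$. There exists a subspace $L \subset \wedge^N \mathbb{C}^M$ of codimension 3 that is not spanned by the decomposable vectors it contains. -/

import Mathlib

open scoped InnerProductSpace

noncomputable section

/-- The `N`-fold tensor power of `ℂ^M`, realized as the Euclidean space with
orthonormal basis indexed by multi-indices `Fin N → Fin M`. -/
abbrev TensorPow (N M : ℕ) : Type := EuclideanSpace ℂ (Fin N → Fin M)

/-- The wedge (Slater determinant) of a family of `N` vectors in `ℂ^M`:
`|v 0⟩ ∧ ⋯ ∧ |v (N-1)⟩ = ∑ σ, sgn σ • |v σ(0), …, v σ(N-1)⟩`. -/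
def wedge {N M : ℕ} (v : Fin N → EuclideanSpace ℂ (Fin M)) : TensorPow N M :=
  WithLp.toLp 2 (fun x => ∑ σ : Equiv.Perm (Fin N), ((Equiv.Perm.sign σ : ℤ) : ℂ) * ∏ k, v (σ k) (x k))

/-- The exterior power `⋀^N ℂ^M`, i.e. the subspace of antisymmetric tensors
in `(ℂ^M)^{⊗N}`. -/
def exteriorPow (N M : ℕ) : Submodule ℂ (TensorPow N M) where
  carrier := {ψ | ∀ σ : Equiv.Perm (Fin N), ∀ x : Fin N → Fin M,
    ψ (x ∘ σ) = ((Equiv.Perm.sign σ : ℤ) : ℂ) * ψ x}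
  add_mem' := by
    intro a b ha hb σ x
    have h1 := ha σ x
    have h2 := hb σ x
    show a (x ∘ σ) + b (x ∘ σ) = ((Equiv.Perm.sign σ : ℤ) : ℂ) * (a x + b x)
    rw [h1, h2]; ring
  zero_mem' := by
    intro σ x
    show (0 : ℂ) = ((Equiv.Perm.sign σ : ℤ) : ℂ) * (0 : ℂ)
    ring
  smul_mem' := by
    intro c a ha σ x
    have h1 := ha σ x
    show c * a (x ∘ σ) = ((Equiv.Perm.sign σ : ℤ) : ℂ) * (c * a x)
    rw [h1]; ring

/-- A decomposable (Slater determinant) vector in `⋀^N ℂ^M`. -/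
def IsSlater {N M : ℕ} (ψ : TensorPow N M) : Prop :=
  ∃ v : Fin N → EuclideanSpace ℂ (Fin M), ψ = wedge v

/-!
Write `D(x, y)` for the determinant with rows `x, y, w₀, …, w_{n-1}` in `K^{n+2}`. For fixed
`b, c, d` the expression `D(a,b) D(c,d) - D(a,c) D(b,d) + D(a,d) D(b,c)` is linear in `a` and
vanishes at `a = b, c, d, w₀, …`; these vectors span `K^{n+2}` unless `D` vanishes on all pairs
from `b, c, d`, so the expression is identically zero (three-term Plücker relation). The
coordinates `ψ_{ij} := ψ(i, j, p₀, …, p_{n-1})` of a Slater determinant are such bordered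
determinants.

Take four indices `0, 1, 2, 3` distinct from the `p_k` and cut `L` out of `⋀^N ℂ^M` by
`ψ₀₁ = ψ₀₂ = ψ₀₃ + ψ₁₂ = 0`. These conditions are independent, as the basis vectors
`e_{01p}, e_{02p}, e_{03p}` show. For a Slater determinant in `L` the Plücker relation reads
`-ψ₀₃² = 0`, so every vector in the span of the Slater determinants of `L` has `ψ₀₃ = 0`,
whereas `e_{03p} - e_{12p} ∈ L` has `ψ₀₃ = 1`.
-/

open Matrix

section Plucker

variable {K : Type*} [Field K] {n : ℕ}

def borderedDet (w : Fin n → Fin (n + 2) → K) (x y : Fin (n + 2) → K) : K :=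
  detRowAlternating (vecCons x (vecCons y w))

def borderedDetLeft (w : Fin n → Fin (n + 2) → K) (y : Fin (n + 2) → K) :
    (Fin (n + 2) → K) →ₗ[K] K :=
  detRowAlternating.toMultilinearMap.toLinearMap (vecCons 0 (vecCons y w)) 0

variable (w : Fin n → Fin (n + 2) → K)

@[simp]
lemma borderedDetLeft_apply (x y : Fin (n + 2) → K) :
    borderedDetLeft w y x = borderedDet w x y := by
  simp [borderedDetLeft, borderedDet, vecCons]

lemma borderedDet_self (x : Fin (n + 2) → K) : borderedDet w x x = 0 :=
  detRowAlternating.map_eq_zero_of_eq _ (i := 0) (j := 1) (by simp) Fin.zero_ne_one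

lemma borderedDet_row_eq_zero (k : Fin n) (y : Fin (n + 2) → K) : borderedDet w (w k) y = 0 :=
  detRowAlternating.map_eq_zero_of_eq _ (i := 0) (j := k.succ.succ) (by simp)
    (Fin.succ_ne_zero _).symm

lemma borderedDet_swap (x y : Fin (n + 2) → K) : borderedDet w y x = -borderedDet w x y := by
  rw [borderedDet, borderedDet,
    ← detRowAlternating.map_swap (vecCons x (vecCons y w)) Fin.zero_ne_one]
  congr 1
  ext i : 1
  refine Fin.cases ?_ (Fin.cases ?_ fun k => ?_) i
  · simp
  · simp
  · rw [Function.comp_apply, Equiv.swap_apply_of_ne_of_ne (Fin.succ_ne_zero _)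
      (by simp [Fin.ext_iff]), cons_val_succ, cons_val_succ, cons_val_succ, cons_val_succ]

lemma span_eq_top_of_borderedDet_ne_zero {x y : Fin (n + 2) → K}
    (h : borderedDet w x y ≠ 0) :
    Submodule.span K (insert x (insert y (Set.range w))) = ⊤ := by
  have := (linearIndependent_rows_of_det_ne_zero (A := of (vecCons x (vecCons y w))) h)
    |>.span_eq_top_of_card_eq_finrank' (by simp)
  change Submodule.span K (Set.range (vecCons x (vecCons y w))) = ⊤ at this
  rwa [range_cons, range_cons, ← Set.insert_eq, ← Set.insert_eq] at this

theorem borderedDet_plucker (a b c d : Fin (n + 2) → K) :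
    borderedDet w a b * borderedDet w c d - borderedDet w a c * borderedDet w b d
      + borderedDet w a d * borderedDet w b c = 0 := by
  set G := borderedDet w c d • borderedDetLeft w b - borderedDet w b d • borderedDetLeft w c
    + borderedDet w b c • borderedDetLeft w d
  suffices hG : G = 0 by simpa [G, mul_comm] using LinearMap.congr_fun hG a
  by_cases h : borderedDet w b c = 0 ∧ borderedDet w b d = 0 ∧ borderedDet w c d = 0
  · simp [G, h]
  set S := insert b (insert c (insert d (Set.range w)))
  obtain ⟨x, hx, y, hy, hxy⟩ : ∃ x ∈ S, ∃ y ∈ S, borderedDet w x y ≠ 0 := by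
    simp only [not_and_or] at h
    rcases h with h | h | h
    exacts [⟨b, by simp [S], c, by simp [S], h⟩, ⟨b, by simp [S], d, by simp [S], h⟩,
      ⟨c, by simp [S], d, by simp [S], h⟩]
  have hspan : Submodule.span K S = ⊤ := by
    refine eq_top_mono (Submodule.span_mono ?_) (span_eq_top_of_borderedDet_ne_zero w hxy)
    simp [Set.insert_subset_iff, hx, hy, S, Set.range_subset_iff]
  refine LinearMap.ext_on hspan ?_
  simp only [S, Set.EqOn, Set.forall_mem_insert, Set.forall_mem_range]
  refine ⟨?_, ?_, ?_, fun k => ?_⟩ <;>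
    simp [G, borderedDet_self, borderedDet_row_eq_zero, borderedDet_swap w b c,
      borderedDet_swap w b d, borderedDet_swap w c d] <;> ring

end Plucker

section Wedge

variable {N M n : ℕ}

lemma wedge_apply_eq_det (v : Fin N → EuclideanSpace ℂ (Fin M)) (x : Fin N → Fin M) :
    wedge v x = det (of fun k l => v l (x k)) := by
  rw [← det_transpose, det_apply']
  rfl

lemma wedge_mem_exteriorPow (v : Fin N → EuclideanSpace ℂ (Fin M)) :
    wedge v ∈ exteriorPow N M := fun σ x => by
  simp only [wedge_apply_eq_det, ← det_permute σ]
  rfl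

def basisWedge (x : Fin N → Fin M) : TensorPow N M :=
  wedge fun k => EuclideanSpace.single (x k) 1

lemma basisWedge_apply_self {x : Fin N → Fin M} (hx : Function.Injective x) :
    basisWedge x x = 1 := by
  have h1 : (of fun k l => EuclideanSpace.single (x l) (1 : ℂ) (x k)) = 1 := by
    ext k l
    simp [one_apply, hx.eq_iff]
  rw [basisWedge, wedge_apply_eq_det, h1, det_one]

lemma basisWedge_apply_eq_zero {x y : Fin N → Fin M} (k : Fin N) (hk : y k ∉ Set.range x) :
    basisWedge x y = 0 := by
  rw [basisWedge, wedge_apply_eq_det]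
  refine det_eq_zero_of_row_eq_zero k fun l => ?_
  simpa using (fun h => hk ⟨l, h.symm⟩ : y k ≠ x l)

def pluckerCoord (ψ : TensorPow (n + 2) M) (p : Fin n → Fin M) (i j : Fin M) : ℂ :=
  ψ (vecCons i (vecCons j p))

lemma pluckerCoord_wedge (v : Fin (n + 2) → EuclideanSpace ℂ (Fin M))
    (p : Fin n → Fin M) (i j : Fin M) :
    pluckerCoord (wedge v) p i j =
      borderedDet (fun k l => v l (p k)) (fun l => v l i) (fun l => v l j) := by
  rw [pluckerCoord, wedge_apply_eq_det, borderedDet, det]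
  congr 1
  ext k : 1
  refine Fin.cases ?_ (Fin.cases ?_ fun k => ?_) k <;> funext l <;> simp

theorem wedge_plucker_relation (v : Fin (n + 2) → EuclideanSpace ℂ (Fin M))
    (p : Fin n → Fin M) (a b c d : Fin M) :
    pluckerCoord (wedge v) p a b * pluckerCoord (wedge v) p c d
      - pluckerCoord (wedge v) p a c * pluckerCoord (wedge v) p b d
      + pluckerCoord (wedge v) p a d * pluckerCoord (wedge v) p b c = 0 := by
  simp only [pluckerCoord_wedge]
  exact borderedDet_plucker _ _ _ _ _

end Wedge

lemma Submodule.finrank_inf_ker_add_finrank {K V W : Type*} [DivisionRing K]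
    [AddCommGroup V] [Module K V] [FiniteDimensional K V] [AddCommGroup W] [Module K W]
    (p : Submodule K V) (f : V →ₗ[K] W) (hf : p.map f = ⊤) :
    Module.finrank K (p ⊓ LinearMap.ker f : Submodule K V) + Module.finrank K W =
      Module.finrank K p := by
  have h := (f.domRestrict p).finrank_range_add_finrank_ker
  rw [LinearMap.range_domRestrict, hf, finrank_top, LinearMap.ker_domRestrict,
    ← Submodule.finrank_map_subtype_eq, Submodule.map_comap_subtype] at h
  omega

section Construction

-- `ι (.inl 0), …, ι (.inl 3)` are the four indices `0, 1, 2, 3` above and `ι ∘ .inr` is `p`.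
variable {n M : ℕ} (ι : Fin 4 ⊕ Fin n ↪ Fin M)

def pluckerIndex (i j : Fin 4) : Fin (n + 2) → Fin M :=
  vecCons (ι (.inl i)) (vecCons (ι (.inl j)) (ι ∘ .inr))

lemma pluckerIndex_eq_comp (i j : Fin 4) :
    pluckerIndex ι i j = ι ∘ vecCons (.inl i) (vecCons (.inl j) .inr) := by
  ext k : 1
  refine Fin.cases ?_ (Fin.cases ?_ fun k => ?_) k <;> simp [pluckerIndex]

lemma pluckerIndex_injective {i j : Fin 4} (h : i ≠ j) :
    Function.Injective (pluckerIndex ι i j) := by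
  rw [pluckerIndex_eq_comp]
  refine ι.injective.comp ?_
  simp [vecCons, Fin.cons_injective_iff, h, Sum.inr_injective]

lemma inl_not_mem_range_pluckerIndex {i j k : Fin 4} (hi : k ≠ i) (hj : k ≠ j) :
    ι (.inl k) ∉ Set.range (pluckerIndex ι i j) := by
  rw [pluckerIndex_eq_comp, Set.range_comp, ι.injective.mem_set_image]
  simp [vecCons, Fin.range_cons, hi, hj]

lemma basisWedge_pluckerIndex_apply {i j i' j' : Fin 4} (h : i < j) (h' : i' < j') :
    basisWedge (pluckerIndex ι i j) (pluckerIndex ι i' j') =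
      if i = i' ∧ j = j' then 1 else 0 := by
  split_ifs with heq
  · obtain ⟨rfl, rfl⟩ := heq
    exact basisWedge_apply_self (pluckerIndex_injective ι h.ne)
  by_cases hi' : i' ≠ i ∧ i' ≠ j
  · exact basisWedge_apply_eq_zero 0 (inl_not_mem_range_pluckerIndex ι hi'.1 hi'.2)
  · refine basisWedge_apply_eq_zero 1 (inl_not_mem_range_pluckerIndex ι ?_ ?_) <;> omega

lemma pluckerCoord_inl (ψ : TensorPow (n + 2) M) (i j : Fin 4) :
    pluckerCoord ψ (ι ∘ .inr) (ι (.inl i)) (ι (.inl j)) = ψ (pluckerIndex ι i j) :=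
  rfl

def pluckerConstraints : TensorPow (n + 2) M →ₗ[ℂ] (Fin 3 → ℂ) :=
  let ev (i j : Fin 4) := PiLp.projₗ 2 (fun _ => ℂ) (pluckerIndex ι i j)
  LinearMap.pi ![ev 0 1, ev 0 2, ev 0 3 + ev 1 2]

def pluckerSubspace : Submodule ℂ (TensorPow (n + 2) M) :=
  exteriorPow (n + 2) M ⊓ LinearMap.ker (pluckerConstraints ι)

lemma pluckerConstraints_basisWedge (t : Fin 3) :
    pluckerConstraints ι (basisWedge (pluckerIndex ι 0 t.succ)) = Pi.single t 1 := by
  ext s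
  fin_cases t <;> fin_cases s <;>
    simp [pluckerConstraints, basisWedge_pluckerIndex_apply]

lemma map_pluckerConstraints_exteriorPow :
    (exteriorPow (n + 2) M).map (pluckerConstraints ι) = ⊤ := by
  rw [eq_top_iff, ← (Pi.basisFun ℂ (Fin 3)).span_eq, Submodule.span_le]
  rintro _ ⟨t, rfl⟩
  refine ⟨basisWedge (pluckerIndex ι 0 t.succ), wedge_mem_exteriorPow _, ?_⟩
  rw [Pi.basisFun_apply, pluckerConstraints_basisWedge]

lemma finrank_pluckerSubspace_add_three :
    Module.finrank ℂ (pluckerSubspace ι) + 3 = Module.finrank ℂ (exteriorPow (n + 2) M) := by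
  have h := (exteriorPow (n + 2) M).finrank_inf_ker_add_finrank _
    (map_pluckerConstraints_exteriorPow ι)
  rwa [Module.finrank_fin_fun] at h

lemma basisWedge_sub_mem_pluckerSubspace :
    basisWedge (pluckerIndex ι 0 3) - basisWedge (pluckerIndex ι 1 2) ∈ pluckerSubspace ι := by
  refine ⟨sub_mem (wedge_mem_exteriorPow _) (wedge_mem_exteriorPow _), ?_⟩
  ext s
  fin_cases s <;> simp [pluckerConstraints, basisWedge_pluckerIndex_apply]

lemma apply_pluckerIndex_zero_three_eq_zero {ψ : TensorPow (n + 2) M}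
    (hψ : ψ ∈ pluckerSubspace ι) (hs : IsSlater ψ) : ψ (pluckerIndex ι 0 3) = 0 := by
  obtain ⟨v, rfl⟩ := hs
  have hφ := LinearMap.mem_ker.1 hψ.2
  have h01 : wedge v (pluckerIndex ι 0 1) = 0 := congr_fun hφ 0
  have h02 : wedge v (pluckerIndex ι 0 2) = 0 := congr_fun hφ 1
  have h12 : wedge v (pluckerIndex ι 0 3) + wedge v (pluckerIndex ι 1 2) = 0 := congr_fun hφ 2
  have hrel := wedge_plucker_relation v (ι ∘ .inr) (ι (.inl 0)) (ι (.inl 1)) (ι (.inl 2))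
    (ι (.inl 3))
  simp only [pluckerCoord_inl, h01, h02, eq_neg_of_add_eq_zero_right h12] at hrel
  exact pow_eq_zero_iff two_ne_zero |>.1 (by linear_combination -hrel)

end Construction

/-- For `N ≥ 2` and `M ≥ N + 2`, there is a subspace `L ⊆ ⋀^N ℂ^M` of codimension 3
which is not spanned by the decomposable vectors it contains. -/
theorem exists_codim_three_not_spanned_by_slaters (N M : ℕ) (hN : 2 ≤ N)
    (hM : N + 2 ≤ M) :
    ∃ L : Submodule ℂ (TensorPow N M),
      L ≤ exteriorPow N M ∧
      Module.finrank ℂ L + 3 = Module.finrank ℂ (exteriorPow N M) ∧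
      Submodule.span ℂ {ψ : TensorPow N M | ψ ∈ L ∧ IsSlater ψ} ≠ L := by
  obtain ⟨n, rfl⟩ : ∃ n, N = n + 2 := ⟨N - 2, by omega⟩
  let ι : Fin 4 ⊕ Fin n ↪ Fin M :=
    finSumFinEquiv.toEmbedding.trans (Fin.castLEEmb (by omega))
  refine ⟨pluckerSubspace ι, inf_le_left, finrank_pluckerSubspace_add_three ι, fun hspan => ?_⟩
  have hle : Submodule.span ℂ {ψ | ψ ∈ pluckerSubspace ι ∧ IsSlater ψ} ≤
      LinearMap.ker (PiLp.projₗ 2 (fun _ => ℂ) (pluckerIndex ι 0 3)) :=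
    Submodule.span_le.2 fun ψ hψ => apply_pluckerIndex_zero_three_eq_zero ι hψ.1 hψ.2
  have h := hle (hspan ▸ basisWedge_sub_mem_pluckerSubspace ι)
  simp [basisWedge_pluckerIndex_apply] at h
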